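/- There exists a constant A > 0 such that for all N ≥ 3 and all positive integers r, the number of n ≤ N with rad(n) = r is at most N^(A/log log N). -/

import Mathlib

/-- The radical of a positive integer: the product of its distinct prime factors. -/
def rad (n : ℕ) : ℕ := n.primeFactors.prod id

/-!
Rankin's trick. For `ε > 0` each `n ≤ N` satisfies `1 ≤ (N / n) ^ ε`, so the count is at most
`N ^ ε * ∑_{rad n = r} n ^ (-ε)`. Writing `n = r m` with `m` composed of primes dividing `r`
bounds this sum by the Euler product
`∏_{p ∣ r} p ^ (-ε) / (1 - p ^ (-ε)) = ∏_{p ∣ r} (p ^ ε - 1)⁻¹`.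
Take `ε = 1 / y` with `y = log log N`, so that `N ^ ε = N ^ (1 / y)`. A factor is at most `1`
once `p ≥ 2 ^ y`, and at most `1 + 2 y` for every prime, so the product is at most
`(1 + 2 y) ^ (2 ^ y) ≤ N ^ (45 / y)`, because `2 ^ y * y ^ 2 = O(e ^ y)`.
-/

open Finset Real

theorem primeFactors_rad (n : ℕ) : (rad n).primeFactors = n.primeFactors :=
  Nat.primeFactors_prod fun _ hp => Nat.prime_of_mem_primeFactors hp

theorem rad_dvd (n : ℕ) : rad n ∣ n := Nat.prod_primeFactors_dvd n

theorem sum_le_prod_inv_one_sub_of_subset_factoredNumbers (f : ℕ →* ℝ) (hf : ∀ n, 0 ≤ f n)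
    {Q : Finset ℕ} (hQ : ∀ p ∈ Q, f p < 1) {M : Finset ℕ} (hM : ↑M ⊆ Nat.factoredNumbers Q) :
    ∑ m ∈ M, f m ≤ ∏ p ∈ Q, (1 - f p)⁻¹ := by
  induction Q using Finset.induction_on generalizing M with
  | empty =>
    have hM1 : M ⊆ {1} := by simpa [← coe_subset] using hM
    simpa using sum_le_sum_of_subset_of_nonneg hM1 fun m _ _ => hf m
  | @insert p Q hpQ ih =>
    have hfp : f p < 1 := hQ p (mem_insert_self p Q)
    let ψ : ℕ → ℕ × ℕ := fun m => (m.factorization p, ordCompl[p] m)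
    have hsplit : ∀ m, f m = f p ^ (ψ m).1 * f (ψ m).2 := fun m => by
      rw [← map_pow, ← map_mul, Nat.ordProj_mul_ordCompl_eq_self]
    have hψ : ψ.Injective := fun a b hab => by
      rw [← Nat.ordProj_mul_ordCompl_eq_self a p, ← Nat.ordProj_mul_ordCompl_eq_self b p]
      simp only [ψ, Prod.mk.injEq] at hab
      rw [hab.2, hab.1]
    have hcompl : ↑(M.image fun m => ordCompl[p] m) ⊆ Nat.factoredNumbers Q := by
      intro c hc
      obtain ⟨m, hm, rfl⟩ := mem_image.1 hc
      have hm0 : m ≠ 0 := Nat.ne_zero_of_mem_factoredNumbers (hM hm)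
      refine Nat.mem_factoredNumbers'.2 fun q hq hqc => ?_
      have hqm : q ∈ insert p Q :=
        Nat.mem_factoredNumbers'.1 (hM hm) q hq ((hqc.trans (Nat.ordCompl_dvd m p)))
      rcases mem_insert.1 hqm with rfl | hqQ
      · exact absurd hqc (Nat.not_dvd_ordCompl hq hm0)
      · exact hqQ
    calc ∑ m ∈ M, f m = ∑ z ∈ M.image ψ, f p ^ z.1 * f z.2 := by
          rw [sum_image hψ.injOn]; exact sum_congr rfl fun m _ => hsplit m
      _ ≤ ∑ z ∈ (M.image fun m => m.factorization p) ×ˢ (M.image fun m => ordCompl[p] m),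
            f p ^ z.1 * f z.2 := by
          refine sum_le_sum_of_subset_of_nonneg ?_ fun z _ _ =>
            mul_nonneg (pow_nonneg (hf p) _) (hf _)
          intro z hz
          obtain ⟨m, hm, rfl⟩ := mem_image.1 hz
          exact mem_product.2 ⟨mem_image_of_mem _ hm, mem_image_of_mem _ hm⟩
      _ = (∑ a ∈ M.image fun m => m.factorization p, f p ^ a) *
            ∑ c ∈ M.image fun m => ordCompl[p] m, f c := by
          rw [sum_mul_sum, sum_product]
      _ ≤ (1 - f p)⁻¹ * ∏ q ∈ Q, (1 - f q)⁻¹ := by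
          refine mul_le_mul ?_ (ih (fun q hq => hQ q (mem_insert_of_mem hq)) hcompl)
            (sum_nonneg fun c _ => hf c) (inv_nonneg.2 (sub_nonneg.2 hfp.le))
          exact sum_le_hasSum _ (fun a _ => pow_nonneg (hf p) a)
            (hasSum_geometric_of_lt_one (hf p) hfp)
      _ = ∏ q ∈ insert p Q, (1 - f q)⁻¹ := by rw [prod_insert hpQ]

theorem sum_le_prod_of_rad_eq (f : ℕ →* ℝ) (hf : ∀ n, 0 ≤ f n) {r : ℕ}
    (hr : ∀ p ∈ r.primeFactors, f p < 1) {S : Finset ℕ} (hS : ∀ n ∈ S, n ≠ 0 ∧ rad n = r) :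
    ∑ n ∈ S, f n ≤ ∏ p ∈ r.primeFactors, f p * (1 - f p)⁻¹ := by
  have hdvd : ∀ n ∈ S, r ∣ n := fun n hn => (hS n hn).2 ▸ rad_dvd n
  have hsplit : ∀ n ∈ S, f n = (∏ p ∈ r.primeFactors, f p) * f (n / r) := by
    intro n hn
    obtain ⟨-, rfl⟩ := hS n hn
    rw [← map_prod, primeFactors_rad, ← map_mul]
    exact congrArg f (Nat.mul_div_cancel' (rad_dvd n)).symm
  have hinj : Set.InjOn (· / r) S := fun a ha b hb hab => by
    rw [← Nat.div_mul_cancel (hdvd a ha), ← Nat.div_mul_cancel (hdvd b hb)]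
    exact congrArg (· * r) hab
  have himage : ↑(S.image (· / r)) ⊆ Nat.factoredNumbers r.primeFactors := by
    intro m hm
    obtain ⟨n, hn, rfl⟩ := mem_image.1 hm
    obtain ⟨hn0, rfl⟩ := hS n hn
    refine Nat.mem_factoredNumbers_of_primeFactors_subset ?_ ?_
    · exact (Nat.div_pos (Nat.le_of_dvd (Nat.pos_of_ne_zero hn0) (rad_dvd n))
        (Nat.pos_of_ne_zero (ne_zero_of_dvd_ne_zero hn0 (rad_dvd n)))).ne'
    · rw [primeFactors_rad]
      exact Nat.primeFactors_mono (Nat.div_dvd_of_dvd (rad_dvd n)) hn0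
  calc ∑ n ∈ S, f n = (∏ p ∈ r.primeFactors, f p) * ∑ m ∈ S.image (· / r), f m := by
        rw [sum_image hinj, mul_sum]; exact sum_congr rfl hsplit
    _ ≤ (∏ p ∈ r.primeFactors, f p) * ∏ p ∈ r.primeFactors, (1 - f p)⁻¹ :=
        mul_le_mul_of_nonneg_left (sum_le_prod_inv_one_sub_of_subset_factoredNumbers f hf hr himage)
          (prod_nonneg fun p _ => hf p)
    _ = ∏ p ∈ r.primeFactors, f p * (1 - f p)⁻¹ := prod_mul_distrib.symm

noncomputable def natRpow (s : ℝ) : ℕ →* ℝ where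
  toFun n := (n : ℝ) ^ s
  map_one' := by simp
  map_mul' m n := by push_cast; exact mul_rpow m.cast_nonneg n.cast_nonneg

theorem natRpow_apply (s : ℝ) (n : ℕ) : natRpow s n = (n : ℝ) ^ s := rfl

theorem sum_rpow_neg_le_prod_of_rad_eq {ε : ℝ} (hε : 0 < ε) {r : ℕ} {S : Finset ℕ}
    (hS : ∀ n ∈ S, n ≠ 0 ∧ rad n = r) :
    ∑ n ∈ S, (n : ℝ) ^ (-ε) ≤ ∏ p ∈ r.primeFactors, ((p : ℝ) ^ ε - 1)⁻¹ := by
  have hpos : ∀ p ∈ r.primeFactors, (1 : ℝ) < p := fun p hp => by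
    exact_mod_cast (Nat.prime_of_mem_primeFactors hp).one_lt
  have hfactor : ∀ p ∈ r.primeFactors,
      natRpow (-ε) p * (1 - natRpow (-ε) p)⁻¹ = ((p : ℝ) ^ ε - 1)⁻¹ := fun p hp => by
    have hp : (p : ℝ) ^ ε ≠ 0 := (rpow_pos_of_pos (by linarith [hpos p hp]) ε).ne'
    rw [natRpow_apply, rpow_neg (Nat.cast_nonneg p), ← mul_inv, mul_sub, mul_one,
      mul_inv_cancel₀ hp]
  rw [← prod_congr rfl hfactor]
  exact sum_le_prod_of_rad_eq (natRpow (-ε)) (fun n => rpow_nonneg n.cast_nonneg _)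
    (fun p hp => rpow_lt_one_of_one_lt_of_neg (hpos p hp) (neg_lt_zero.2 hε)) hS

theorem card_le_rpow_mul_sum_rpow_neg {S : Finset ℕ} {N : ℕ} {ε : ℝ} (hε : 0 ≤ ε)
    (hS : ∀ n ∈ S, 0 < n ∧ n ≤ N) : (#S : ℝ) ≤ (N : ℝ) ^ ε * ∑ n ∈ S, (n : ℝ) ^ (-ε) := by
  rw [card_eq_sum_ones, Nat.cast_sum, mul_sum]
  refine sum_le_sum fun n hn => ?_
  have hn0 : (0 : ℝ) < n := Nat.cast_pos.2 (hS n hn).1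
  rw [rpow_neg hn0.le, Nat.cast_one, ← div_eq_mul_inv, one_le_div (by positivity)]
  exact rpow_le_rpow hn0.le (Nat.cast_le.2 (hS n hn).2) hε

theorem prod_le_rpow_of_le_one_of_le {Q : Finset ℕ} (hQ : 0 ∉ Q) {g : ℕ → ℝ} {B P : ℝ}
    (hP : 0 ≤ P) (hB : 1 ≤ B) (hg0 : ∀ p ∈ Q, 0 ≤ g p) (hgB : ∀ p ∈ Q, g p ≤ B)
    (hg1 : ∀ p ∈ Q, P ≤ p → g p ≤ 1) : ∏ p ∈ Q, g p ≤ B ^ P := by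
  set small := Q.filter fun p : ℕ => (p : ℝ) < P
  have hcard : (#small : ℝ) ≤ P := by
    have hsub : small ⊆ Icc 1 ⌊P⌋₊ := fun p hp => by
      obtain ⟨hpQ, hpP⟩ := mem_filter.1 hp
      exact mem_Icc.2 ⟨Nat.pos_of_ne_zero (ne_of_mem_of_not_mem hpQ hQ), Nat.le_floor hpP.le⟩
    have := card_le_card hsub
    rw [Nat.card_Icc, Nat.add_sub_cancel] at this
    exact (Nat.cast_le.2 this).trans (Nat.floor_le hP)
  rw [← prod_filter_mul_prod_filter_not Q fun p : ℕ => (p : ℝ) < P]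
  calc (∏ p ∈ small, g p) * ∏ p ∈ Q.filter (fun p : ℕ => ¬ (p : ℝ) < P), g p
      ≤ B ^ #small * 1 := by
        refine mul_le_mul ?_ ?_ (prod_nonneg fun p hp => hg0 p (mem_filter.1 hp).1) (by positivity)
        · exact (prod_le_prod (fun p hp => hg0 p (mem_filter.1 hp).1)
            fun p hp => hgB p (mem_filter.1 hp).1).trans_eq (prod_const B)
        · exact prod_le_one (fun p hp => hg0 p (mem_filter.1 hp).1)
            fun p hp => hg1 p (mem_filter.1 hp).1 (not_lt.1 (mem_filter.1 hp).2)
    _ ≤ B ^ P := by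
        rw [mul_one, ← rpow_natCast]
        exact rpow_le_rpow_of_exponent_le hB hcard

theorem inv_rpow_sub_one_le {ε x : ℝ} (hε : 0 < ε) (hx : 2 ≤ x) : (x ^ ε - 1)⁻¹ ≤ 2 / ε := by
  have hlog2 : 1 / 2 < log 2 := by linarith [log_two_gt_d9]
  have h2ε : ε / 2 ≤ 2 ^ ε - 1 := by
    rw [rpow_def_of_pos two_pos]
    nlinarith [add_one_le_exp (log 2 * ε)]
  calc (x ^ ε - 1)⁻¹ ≤ (ε / 2)⁻¹ := by
        gcongr
        linarith [rpow_le_rpow zero_le_two hx hε.le]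
    _ = 2 / ε := inv_div ε 2

theorem prod_inv_rpow_inv_sub_one_le {Q : Finset ℕ} (hQ : ∀ p ∈ Q, p.Prime) {y : ℝ} (hy : 0 < y) :
    ∏ p ∈ Q, ((p : ℝ) ^ y⁻¹ - 1)⁻¹ ≤ (1 + 2 * y) ^ (2 : ℝ) ^ y := by
  have htwo : ∀ p ∈ Q, (2 : ℝ) ≤ p := fun p hp => by exact_mod_cast (hQ p hp).two_le
  have hone : ∀ p ∈ Q, 1 < (p : ℝ) ^ y⁻¹ := fun p hp =>
    one_lt_rpow (by linarith [htwo p hp]) (inv_pos.2 hy)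
  refine prod_le_rpow_of_le_one_of_le (fun h => (hQ 0 h).ne_zero rfl) (by positivity)
    (by linarith) (fun p hp => inv_nonneg.2 (sub_nonneg.2 (hone p hp).le)) (fun p hp => ?_)
    (fun p hp hPp => ?_)
  · calc ((p : ℝ) ^ y⁻¹ - 1)⁻¹ ≤ 2 / y⁻¹ := inv_rpow_sub_one_le (inv_pos.2 hy) (htwo p hp)
      _ ≤ 1 + 2 * y := by rw [div_inv_eq_mul]; linarith
  · have h2 : (2 : ℝ) ≤ (p : ℝ) ^ y⁻¹ := by
      calc (2 : ℝ) = ((2 : ℝ) ^ y) ^ y⁻¹ := (rpow_rpow_inv zero_le_two hy.ne').symm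
        _ ≤ (p : ℝ) ^ y⁻¹ := rpow_le_rpow (by positivity) hPp (inv_nonneg.2 hy.le)
    exact inv_le_one_of_one_le₀ (by linarith)

theorem two_mul_sq_le_exp {y : ℝ} (hy : 0 ≤ y) : 2 * y ^ 2 ≤ 45 * exp ((1 - log 2) * y) := by
  have hlog2 : log 2 < 0.7 := by linarith [log_two_lt_d9]
  have ht : 0.3 * y ≤ (1 - log 2) * y := by nlinarith
  have := quadratic_le_exp_of_nonneg (by positivity : 0 ≤ 0.3 * y)
  have := exp_le_exp.2 ht
  nlinarith

theorem exp_exp_rpow_inv_mul_le {y : ℝ} (hy : 0 < y) :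
    exp (exp y) ^ y⁻¹ * (1 + 2 * y) ^ (2 : ℝ) ^ y ≤ exp (exp y) ^ (46 / y) := by
  have hlog : log (1 + 2 * y) ≤ 2 * y := by
    linarith [log_le_sub_one_of_pos (by positivity : 0 < 1 + 2 * y)]
  have hexp : exp y = 2 ^ y * exp ((1 - log 2) * y) := by
    rw [rpow_def_of_pos two_pos, ← exp_add]; ring_nf
  have key : log (1 + 2 * y) * 2 ^ y * y ≤ 45 * exp y := by
    calc log (1 + 2 * y) * 2 ^ y * y ≤ 2 * y * 2 ^ y * y := by gcongr
      _ = 2 ^ y * (2 * y ^ 2) := by ring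
      _ ≤ 2 ^ y * (45 * exp ((1 - log 2) * y)) := by
          gcongr 2 ^ y * ?_; exact two_mul_sq_le_exp hy.le
      _ = 45 * exp y := by rw [hexp]; ring
  rw [← exp_mul, ← exp_mul, rpow_def_of_pos (by positivity), ← exp_add, exp_le_exp]
  calc exp y * y⁻¹ + log (1 + 2 * y) * 2 ^ y ≤ exp y * y⁻¹ + 45 * exp y / y := by
        gcongr; rwa [le_div_iff₀ hy]
    _ = exp y * (46 / y) := by ring

theorem card_rad_eq_loglog :
    ∃ A : ℝ, 0 < A ∧ ∀ N : ℕ, 3 ≤ N → ∀ r : ℕ, 0 < r →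
      (((Finset.Icc 1 N).filter (fun n => rad n = r)).card : ℝ)
        ≤ (N : ℝ) ^ (A / Real.log (Real.log N)) := by
  refine ⟨46, by norm_num, fun N hN r _ => ?_⟩
  have hlogN : 1 < log N := by
    rw [lt_log_iff_exp_lt (by positivity)]
    calc exp 1 < 3 := by linarith [exp_one_lt_d9]
      _ ≤ N := by exact_mod_cast hN
  set y := log (log N)
  have hy : 0 < y := log_pos hlogN
  have hNy : (N : ℝ) = exp (exp y) := by rw [exp_log (by linarith), exp_log (by positivity)]
  set S := (Icc 1 N).filter fun n => rad n = r
  have hS : ∀ n ∈ S, (0 < n ∧ n ≤ N) ∧ rad n = r := fun n hn => by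
    simp only [S, mem_filter, mem_Icc] at hn; exact hn
  calc (#S : ℝ) ≤ (N : ℝ) ^ y⁻¹ * ∑ n ∈ S, (n : ℝ) ^ (-y⁻¹) :=
        card_le_rpow_mul_sum_rpow_neg (inv_nonneg.2 hy.le) fun n hn => (hS n hn).1
    _ ≤ (N : ℝ) ^ y⁻¹ * ∏ p ∈ r.primeFactors, ((p : ℝ) ^ y⁻¹ - 1)⁻¹ := by
        gcongr
        exact sum_rpow_neg_le_prod_of_rad_eq (inv_pos.2 hy) fun n hn =>
          ⟨(hS n hn).1.1.ne', (hS n hn).2⟩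
    _ ≤ (N : ℝ) ^ y⁻¹ * (1 + 2 * y) ^ (2 : ℝ) ^ y := by
        gcongr
        exact prod_inv_rpow_inv_sub_one_le (fun p => Nat.prime_of_mem_primeFactors) hy
    _ ≤ (N : ℝ) ^ (46 / y) := hNy ▸ exp_exp_rpow_inv_mul_le hy
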